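/- arXiv:2207.10097 — 2 statements merged into one kernel-verified Lean document; each statement's English description precedes it below -/
import Mathlib

section
/- Let E be a nonzero finite-dimensional complex inner product space, let H₁ and H₂ be self-adjoint operators on E, and let S be a nonzero subspace of E such that H₂ x = 0 for every x ∈ S and ⟨x, H₂ x⟩ ≥ J‖x‖² for every x in the orthogonal complement of S. If J > 2‖H₁‖ and J ≥ 8‖H₁‖² + 2‖H₁‖, then λ₀(H₁|_S) − 1/8 ≤ λ₀(H₁ + H₂) ≤ λ₀(H₁|_S). -/
/-!
Split a unit vector as `x = y + z` with `y ∈ S`, `z ∈ Sᗮ`, and put `t = ‖z‖`, `m = λ₀(H₁|_S)`.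
Since `H₂` kills `S` and is self-adjoint, only `⟪z, H₂ z⟫ ≥ J t²` survives from `H₂`, while
`H₁` contributes at least `m ‖y‖² - 2‖H₁‖ t - ‖H₁‖ t²`. With `‖y‖² = 1 - t²` and `m ≤ ‖H₁‖`
this gives `m + (J - 2‖H₁‖) t² - 2‖H₁‖ t ≥ m + 8‖H₁‖² t² - 2‖H₁‖ t ≥ m - 1/8`, the last step
being `(8‖H₁‖ t - 1)² ≥ 0`. The upper bound holds because `H₁ + H₂` agrees with `H₁` on `S`.
-/

/-- The smallest eigenvalue of a self-adjoint operator `A` on a nonzero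
finite-dimensional complex inner product space, expressed as the infimum of the
Rayleigh quotient over unit vectors. -/
noncomputable def groundEnergy {E : Type*} [NormedAddCommGroup E] [InnerProductSpace ℂ E]
    (A : E →L[ℂ] E) : ℝ :=
  ⨅ x : {x : E // ‖x‖ = 1}, (inner ℂ (x : E) (A (x : E)) : ℂ).re

/-- The infimum of the Rayleigh quotient of `A` over unit vectors lying in the
subspace `S`, i.e. the smallest eigenvalue of the restriction `A|_S`. -/
noncomputable def groundEnergyOn {E : Type*} [NormedAddCommGroup E] [InnerProductSpace ℂ E]
    (A : E →L[ℂ] E) (S : Submodule ℂ E) : ℝ :=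
  ⨅ x : {x : E // x ∈ S ∧ ‖x‖ = 1}, (inner ℂ (x : E) (A (x : E)) : ℂ).re

open RCLike

open scoped InnerProductSpace

section Inner

variable {𝕜 E : Type*} [RCLike 𝕜] [NormedAddCommGroup E] [InnerProductSpace 𝕜 E]

theorem neg_opNorm_mul_le_re_inner_map (A : E →L[𝕜] E) (x y : E) :
    -(‖A‖ * ‖x‖ * ‖y‖) ≤ re ⟪x, A y⟫_𝕜 := by
  have h := re_inner_le_norm (𝕜 := 𝕜) x (-A y)
  rw [inner_neg_right, map_neg, norm_neg] at h
  have := A.le_opNorm y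
  nlinarith [norm_nonneg x]

theorem re_inner_map_self_le (A : E →L[𝕜] E) (x : E) :
    re ⟪x, A x⟫_𝕜 ≤ ‖A‖ * ‖x‖ ^ 2 := by
  have := A.le_opNorm x
  nlinarith [re_inner_le_norm (𝕜 := 𝕜) x (A x), norm_nonneg x]

theorem re_inner_map_self_add_ge (A : E →L[𝕜] E) (y z : E) :
    re ⟪y, A y⟫_𝕜 - 2 * ‖A‖ * ‖y‖ * ‖z‖ - ‖A‖ * ‖z‖ ^ 2 ≤ re ⟪y + z, A (y + z)⟫_𝕜 := by
  simp only [map_add, inner_add_left, inner_add_right]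
  nlinarith [neg_opNorm_mul_le_re_inner_map A y z, neg_opNorm_mul_le_re_inner_map A z y,
    neg_opNorm_mul_le_re_inner_map A z z]

theorem LinearMap.IsSymmetric.inner_map_add_self_of_map_eq_zero {T : E →ₗ[𝕜] E}
    (hT : T.IsSymmetric) {y : E} (hy : T y = 0) (z : E) :
    ⟪y + z, T (y + z)⟫_𝕜 = ⟪z, T z⟫_𝕜 := by
  have hyz : ⟪y, T z⟫_𝕜 = 0 := by rw [← hT y z, hy, inner_zero_left]
  rw [map_add, hy, zero_add, inner_add_left, hyz, zero_add]

end Inner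

section GroundEnergy

variable {E : Type*} [NormedAddCommGroup E] [InnerProductSpace ℂ E]

theorem neg_opNorm_le_re_inner_map_self (A : E →L[ℂ] E) {x : E} (hx : ‖x‖ = 1) :
    -‖A‖ ≤ re ⟪x, A x⟫_ℂ := by
  simpa [hx] using neg_opNorm_mul_le_re_inner_map A x x

theorem groundEnergy_le_re_inner (A : E →L[ℂ] E) {x : E} (hx : ‖x‖ = 1) :
    groundEnergy A ≤ re ⟪x, A x⟫_ℂ := by
  refine ciInf_le ⟨-‖A‖, ?_⟩ (⟨x, hx⟩ : {x : E // ‖x‖ = 1})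
  rintro _ ⟨⟨y, hy⟩, rfl⟩
  exact neg_opNorm_le_re_inner_map_self A hy

theorem groundEnergyOn_le_re_inner (A : E →L[ℂ] E) {S : Submodule ℂ E} {x : E} (hxS : x ∈ S)
    (hx : ‖x‖ = 1) : groundEnergyOn A S ≤ re ⟪x, A x⟫_ℂ := by
  refine ciInf_le ⟨-‖A‖, ?_⟩ (⟨x, hxS, hx⟩ : {x : E // x ∈ S ∧ ‖x‖ = 1})
  rintro _ ⟨⟨y, -, hy⟩, rfl⟩
  exact neg_opNorm_le_re_inner_map_self A hy

theorem groundEnergyOn_mul_norm_sq_le (A : E →L[ℂ] E) {S : Submodule ℂ E} {y : E} (hy : y ∈ S) :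
    groundEnergyOn A S * ‖y‖ ^ 2 ≤ re ⟪y, A y⟫_ℂ := by
  rcases eq_or_ne y 0 with rfl | hy0
  · simp
  have h := groundEnergyOn_le_re_inner A (S.smul_mem (‖y‖⁻¹ : ℂ) hy) (norm_smul_inv_norm hy0)
  have hscale : re ⟪(‖y‖⁻¹ : ℂ) • y, A ((‖y‖⁻¹ : ℂ) • y)⟫_ℂ = (‖y‖ ^ 2)⁻¹ * re ⟪y, A y⟫_ℂ := by
    rw [map_smul, inner_smul_left, inner_smul_right, ← mul_assoc, ← Complex.ofReal_inv,
      Complex.conj_ofReal, ← Complex.ofReal_mul, ← mul_inv, ← sq]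
    exact re_ofReal_mul _ _
  rw [hscale] at h
  calc groundEnergyOn A S * ‖y‖ ^ 2 ≤ (‖y‖ ^ 2)⁻¹ * re ⟪y, A y⟫_ℂ * ‖y‖ ^ 2 := by gcongr
    _ = re ⟪y, A y⟫_ℂ := by field_simp

theorem groundEnergyOn_le_opNorm (A : E →L[ℂ] E) (S : Submodule ℂ E) :
    groundEnergyOn A S ≤ ‖A‖ := by
  rcases isEmpty_or_nonempty {x : E // x ∈ S ∧ ‖x‖ = 1} with hempty | ⟨x, hxS, hx⟩
  · simp [groundEnergyOn, norm_nonneg]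
  · simpa [hx] using (groundEnergyOn_le_re_inner A hxS hx).trans (re_inner_map_self_le A x)

theorem nonempty_unit_mem_of_ne_bot {S : Submodule ℂ E} (hS : S ≠ ⊥) :
    Nonempty {x : E // x ∈ S ∧ ‖x‖ = 1} := by
  obtain ⟨y, hyS, hy0⟩ := Submodule.exists_mem_ne_zero_of_ne_bot hS
  exact ⟨⟨(‖y‖⁻¹ : ℂ) • y, S.smul_mem _ hyS, norm_smul_inv_norm hy0⟩⟩

theorem groundEnergy_le_groundEnergyOn (A : E →L[ℂ] E) {S : Submodule ℂ E} (hS : S ≠ ⊥) :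
    groundEnergy A ≤ groundEnergyOn A S :=
  have := nonempty_unit_mem_of_ne_bot hS
  le_ciInf fun x => groundEnergy_le_re_inner A x.2.2

theorem groundEnergyOn_add_of_forall_mem_map_eq_zero (A B : E →L[ℂ] E) {S : Submodule ℂ E}
    (hB : ∀ x ∈ S, B x = 0) : groundEnergyOn (A + B) S = groundEnergyOn A S := by
  unfold groundEnergyOn
  exact iInf_congr fun x => by rw [add_apply, hB x x.2.1, add_zero]

theorem groundEnergyOn_sub_eighth_le_re_inner {H₁ H₂ : E →L[ℂ] E}
    (hH₂ : (H₂ : E →ₗ[ℂ] E).IsSymmetric)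
    {S : Submodule ℂ E} [S.HasOrthogonalProjection] (hker : ∀ x ∈ S, H₂ x = 0) {J : ℝ}
    (hJ : J ≥ 8 * ‖H₁‖ ^ 2 + 2 * ‖H₁‖)
    (hgap : ∀ x ∈ Sᗮ, J * ‖x‖ ^ 2 ≤ re ⟪x, H₂ x⟫_ℂ) {x : E} (hx : ‖x‖ = 1) :
    groundEnergyOn H₁ S - 1 / 8 ≤ re ⟪x, (H₁ + H₂) x⟫_ℂ := by
  obtain ⟨y, hyS, z, hzS, rfl⟩ := S.exists_add_mem_mem_orthogonal x
  have hpyth : ‖y‖ ^ 2 + ‖z‖ ^ 2 = 1 := by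
    have h := norm_add_sq_eq_norm_sq_add_norm_sq_of_inner_eq_zero y z
      (Submodule.inner_right_of_mem_orthogonal hyS hzS)
    rw [hx, one_mul] at h
    rw [sq, sq, h]
  have hH₁ := re_inner_map_self_add_ge H₁ y z
  have hH₂z := hgap z hzS
  have hm := groundEnergyOn_mul_norm_sq_le H₁ hyS
  have hmL := groundEnergyOn_le_opNorm H₁ S
  have hH₂yz : ⟪y + z, H₂ (y + z)⟫_ℂ = ⟪z, H₂ z⟫_ℂ :=
    hH₂.inner_map_add_self_of_map_eq_zero (hker y hyS) z
  rw [add_apply, inner_add_right, map_add, hH₂yz]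
  have hy1 : ‖y‖ ≤ 1 := by nlinarith [norm_nonneg y, norm_nonneg z]
  nlinarith [sq_nonneg (8 * ‖H₁‖ * ‖z‖ - 1), norm_nonneg z, norm_nonneg H₁,
    mul_nonneg (mul_nonneg (norm_nonneg H₁) (sub_nonneg.mpr hy1)) (norm_nonneg z),
    mul_le_mul_of_nonneg_right hJ (sq_nonneg ‖z‖)]

end GroundEnergy

theorem projection_lemma_eighth_general
    {E : Type*} [NormedAddCommGroup E] [InnerProductSpace ℂ E]
    [FiniteDimensional ℂ E]
    (H₁ H₂ : E →L[ℂ] E) (hH₂ : IsSelfAdjoint H₂)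
    (S : Submodule ℂ E) (hS : S ≠ ⊥)
    (hker : ∀ x ∈ S, H₂ x = 0)
    (J : ℝ) (hJ' : J ≥ 8 * ‖H₁‖ ^ 2 + 2 * ‖H₁‖)
    (hgap : ∀ x ∈ Sᗮ, J * ‖x‖ ^ 2 ≤ (inner ℂ x (H₂ x) : ℂ).re) :
    groundEnergyOn H₁ S - 1 / 8 ≤ groundEnergy (H₁ + H₂) ∧
      groundEnergy (H₁ + H₂) ≤ groundEnergyOn H₁ S := by
  obtain ⟨u, -, hu⟩ := nonempty_unit_mem_of_ne_bot hS
  have : Nonempty {x : E // ‖x‖ = 1} := ⟨⟨u, hu⟩⟩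
  refine ⟨le_ciInf fun x =>
    groundEnergyOn_sub_eighth_le_re_inner hH₂.isSymmetric hker hJ' hgap x.2, ?_⟩
  calc groundEnergy (H₁ + H₂) ≤ groundEnergyOn (H₁ + H₂) S := groundEnergy_le_groundEnergyOn _ hS
    _ = groundEnergyOn H₁ S := groundEnergyOn_add_of_forall_mem_map_eq_zero H₁ H₂ hker

/-- The corollary to the projection lemma: if moreover `J ≥ 8‖H₁‖² + 2‖H₁‖`, then
`λ₀(H₁|_S) − 1/8 ≤ λ₀(H₁ + H₂) ≤ λ₀(H₁|_S)`. -/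
theorem projection_lemma_eighth
    {E : Type*} [NormedAddCommGroup E] [InnerProductSpace ℂ E]
    [FiniteDimensional ℂ E] [Nontrivial E]
    (H₁ H₂ : E →L[ℂ] E) (hH₁ : IsSelfAdjoint H₁) (hH₂ : IsSelfAdjoint H₂)
    (S : Submodule ℂ E) (hS : S ≠ ⊥)
    (hker : ∀ x ∈ S, H₂ x = 0)
    (J : ℝ) (hJ : J > 2 * ‖H₁‖) (hJ' : J ≥ 8 * ‖H₁‖ ^ 2 + 2 * ‖H₁‖)
    (hgap : ∀ x ∈ Sᗮ, J * ‖x‖ ^ 2 ≤ (inner ℂ x (H₂ x) : ℂ).re) :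
    groundEnergyOn H₁ S - 1 / 8 ≤ groundEnergy (H₁ + H₂) ∧
      groundEnergy (H₁ + H₂) ≤ groundEnergyOn H₁ S :=
  projection_lemma_eighth_general H₁ H₂ hH₂ S hS hker J hJ' hgap
end

section
/- Let d ≥ 1 and T ≥ 1, let U₁, …, U_T be d × d unitary complex matrices, and let H_prop = Σ_{t=1}^{T} [(1/2)·I_d ⊗ (E_{t,t} + E_{t−1,t−1}) − (1/2)·U_t ⊗ E_{t,t−1} − (1/2)·U_t† ⊗ E_{t−1,t}] be the associated propagation Hamiltonian on ℂ^{d(T+1)}. Then every unit vector ψ orthogonal to the kernel of H_prop satisfies ⟨ψ, H_prop ψ⟩ ≥ 2/(T+1)²; equivalently, every nonzero eigenvalue of H_prop is at least 2/(T+1)². -/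
open Matrix
open scoped Kronecker ComplexOrder

/-- The Feynman–Kitaev propagation Hamiltonian of the circuit `U_T ⋯ U₁` with an
explicit `(T+1)`-dimensional clock register:
`H_prop = Σ_t [(1/2)·I ⊗ (E_{t,t} + E_{t−1,t−1}) − (1/2)·U_t ⊗ E_{t,t−1} − (1/2)·U_t† ⊗ E_{t−1,t}]`. -/
noncomputable def Hprop (d T : ℕ) (U : Fin T → Matrix (Fin d) (Fin d) ℂ) :
    Matrix (Fin d × Fin (T + 1)) (Fin d × Fin (T + 1)) ℂ :=
  ∑ t : Fin T,
    ((1 / 2 : ℂ) • ((1 : Matrix (Fin d) (Fin d) ℂ) ⊗ₖ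
        (single t.succ t.succ (1 : ℂ) + single t.castSucc t.castSucc (1 : ℂ)))
      - (1 / 2 : ℂ) • (U t ⊗ₖ single t.succ t.castSucc (1 : ℂ))
      - (1 / 2 : ℂ) • ((U t)ᴴ ⊗ₖ single t.castSucc t.succ (1 : ℂ)))

/-!
Write `ψ_s` for the clock-`s` slice of `ψ` and `V_s = U_{s-1} ⋯ U_0`. The energy is
`⟨ψ, H_prop ψ⟩ = ½ Σ_t ‖ψ_{t+1} - U_t ψ_t‖² = ½ Σ_t ‖w_{t+1} - w_t‖²` in the rotating frame
`w_s = V_sᴴ ψ_s`. The history states `(V_s φ)_s` have zero energy, hence lie in the kernel, so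
orthogonality of `ψ` to the kernel says exactly `Σ_s w_s = 0`. A discrete Poincaré inequality on the
path `0, …, T` then gives `‖ψ‖² = Σ_s ‖w_s‖² ≤ (T+1)²/6 · Σ_t ‖w_{t+1} - w_t‖²`: summing
`‖w_s - w_r‖² ≤ |s - r| Σ_t ‖w_{t+1} - w_t‖²` over all pairs, the left side is `2(T+1) Σ_s ‖w_s‖²`
because the `w_s` sum to zero, and `Σ_{r,s} |s - r| = ((T+1)³ - (T+1))/3`. Since `H_prop` is
Hermitian, eigenvectors of nonzero eigenvalues are orthogonal to its kernel.
-/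

open Finset

section Poincare

theorem three_mul_sum_range_sum_range_dist_add (n : ℕ) :
    3 * ∑ r ∈ range n, ∑ s ∈ range n, r.dist s + n = n ^ 3 := by
  have hlast : ∀ n : ℕ, 2 * ∑ r ∈ range n, r.dist n = n * (n + 1) := by
    intro n
    induction n with
    | zero => simp
    | succ n ih =>
      have hshift : ∀ r ∈ range (n + 1), r.dist (n + 1) = r.dist n + 1 := by
        intro r hr
        simp only [mem_range] at hr
        simp only [Nat.dist]
        omega
      rw [sum_congr rfl hshift, sum_add_distrib, sum_range_succ, Nat.dist_self]
      simp only [sum_const, card_range, smul_eq_mul]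
      linarith
  induction n with
  | zero => simp
  | succ n ih =>
    simp only [sum_range_succ, sum_add_distrib]
    have hsymm : ∑ s ∈ range n, n.dist s = ∑ r ∈ range n, r.dist n :=
      sum_congr rfl fun _ _ => Nat.dist_comm _ _
    rw [hsymm, Nat.dist_self]
    nlinarith [hlast n]

variable {E : Type*} [SeminormedAddCommGroup E]

theorem norm_sub_sq_le_mul_sum_Ico (η : ℕ → E) {r s : ℕ} (hrs : r ≤ s) :
    ‖η s - η r‖ ^ 2 ≤ (s - r : ℕ) * ∑ t ∈ Ico r s, ‖η (t + 1) - η t‖ ^ 2 := by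
  calc ‖η s - η r‖ ^ 2 = ‖∑ t ∈ Ico r s, (η (t + 1) - η t)‖ ^ 2 := by rw [sum_Ico_sub η hrs]
    _ ≤ (∑ t ∈ Ico r s, ‖η (t + 1) - η t‖) ^ 2 := by gcongr; exact norm_sum_le _ _
    _ ≤ _ := by
      simpa using sq_sum_le_card_mul_sum_sq (s := Ico r s) (f := fun t => ‖η (t + 1) - η t‖)

theorem norm_sub_sq_le_dist_mul_sum_range (η : ℕ → E) {n r s : ℕ} (hr : r ≤ n) (hs : s ≤ n) :
    ‖η s - η r‖ ^ 2 ≤ r.dist s * ∑ t ∈ range n, ‖η (t + 1) - η t‖ ^ 2 := by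
  wlog hrs : r ≤ s generalizing r s
  · rw [norm_sub_rev, Nat.dist_comm]
    exact this hs hr (by omega)
  calc ‖η s - η r‖ ^ 2 ≤ (s - r : ℕ) * ∑ t ∈ Ico r s, ‖η (t + 1) - η t‖ ^ 2 :=
        norm_sub_sq_le_mul_sum_Ico η hrs
    _ ≤ r.dist s * ∑ t ∈ range n, ‖η (t + 1) - η t‖ ^ 2 := by
        rw [Nat.dist_eq_sub_of_le hrs]
        gcongr
        intro t ht
        simp only [mem_Ico, mem_range] at ht ⊢
        omega

theorem sum_sum_norm_sub_sq (𝕜 : Type*) [RCLike 𝕜] [InnerProductSpace 𝕜 E] {ι : Type*}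
    (s : Finset ι) (η : ι → E) :
    ∑ r ∈ s, ∑ q ∈ s, ‖η q - η r‖ ^ 2 =
      2 * #s * ∑ q ∈ s, ‖η q‖ ^ 2 - 2 * ‖∑ q ∈ s, η q‖ ^ 2 := by
  have hinner : ∑ r ∈ s, ∑ q ∈ s, RCLike.re (inner 𝕜 (η q) (η r)) = ‖∑ q ∈ s, η q‖ ^ 2 := by
    simp only [← inner_self_eq_norm_sq (𝕜 := 𝕜), sum_inner, inner_sum, map_sum]
  simp only [@norm_sub_sq 𝕜, sum_add_distrib, sum_sub_distrib, ← mul_sum, hinner, sum_const,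
    nsmul_eq_mul]
  ring

theorem discrete_poincare_range (𝕜 : Type*) [RCLike 𝕜] [InnerProductSpace 𝕜 E] (n : ℕ)
    (η : ℕ → E) (hη : ∑ s ∈ range (n + 1), η s = 0) :
    6 * ∑ s ∈ range (n + 1), ‖η s‖ ^ 2 ≤
      ((n : ℝ) + 1) ^ 2 * ∑ t ∈ range n, ‖η (t + 1) - η t‖ ^ 2 := by
  set D := ∑ t ∈ range n, ‖η (t + 1) - η t‖ ^ 2
  have hpairs : ∑ r ∈ range (n + 1), ∑ s ∈ range (n + 1), ‖η s - η r‖ ^ 2 ≤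
      (∑ r ∈ range (n + 1), ∑ s ∈ range (n + 1), r.dist s : ℕ) * D := by
    push_cast
    simp only [sum_mul]
    gcongr with r hr s hs
    exact norm_sub_sq_le_dist_mul_sum_range η (by simpa [Nat.lt_succ_iff] using hr)
      (by simpa [Nat.lt_succ_iff] using hs)
  rw [sum_sum_norm_sub_sq 𝕜, hη, norm_zero, card_range] at hpairs
  have hdist : 3 * ((∑ r ∈ range (n + 1), ∑ s ∈ range (n + 1), r.dist s : ℕ) : ℝ) + (n + 1) =
      ((n : ℝ) + 1) ^ 3 := by
    exact_mod_cast three_mul_sum_range_sum_range_dist_add (n + 1)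
  have hD : 0 ≤ D := sum_nonneg fun _ _ => sq_nonneg _
  push_cast at hpairs hdist
  nlinarith

theorem discrete_poincare_fin (𝕜 : Type*) [RCLike 𝕜] [InnerProductSpace 𝕜 E] (n : ℕ)
    (η : Fin (n + 1) → E) (hη : ∑ s, η s = 0) :
    6 * ∑ s, ‖η s‖ ^ 2 ≤ ((n : ℝ) + 1) ^ 2 * ∑ t : Fin n, ‖η t.succ - η t.castSucc‖ ^ 2 := by
  set η' : ℕ → E := fun k => η (Fin.ofNat (n + 1) k)
  have hval : ∀ s : Fin (n + 1), η' s = η s := fun s =>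
    congrArg η (Fin.ext (Nat.mod_eq_of_lt s.isLt))
  have hcastSucc : ∀ t : Fin n, η' t = η t.castSucc := fun t => hval t.castSucc
  have hsucc : ∀ t : Fin n, η' (t + 1) = η t.succ := fun t => hval t.succ
  have h := discrete_poincare_range 𝕜 n η' (by
    rw [← Fin.sum_univ_eq_sum_range]
    simpa only [hval] using hη)
  rw [← Fin.sum_univ_eq_sum_range (fun s => ‖η' s‖ ^ 2),
    ← Fin.sum_univ_eq_sum_range (fun t => ‖η' (t + 1) - η' t‖ ^ 2)] at h
  simpa only [hval, hcastSucc, hsucc] using h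

end Poincare

section Slices

variable {m n α : Type*}

def clockSlice (ψ : m × n → α) (s : n) : m → α := fun i => ψ (i, s)

theorem clockSlice_star [Star α] (ψ : m × n → α) (s : n) :
    clockSlice (star ψ) s = star (clockSlice ψ s) :=
  rfl

variable [Fintype m] [Fintype n]

theorem dotProduct_eq_sum_clockSlice [AddCommMonoid α] [Mul α] (u v : m × n → α) :
    u ⬝ᵥ v = ∑ s, clockSlice u s ⬝ᵥ clockSlice v s := by
  simp only [dotProduct, Fintype.sum_prod_type, clockSlice]
  exact sum_comm

theorem dotProduct_kronecker_single_mulVec [DecidableEq n] [Semiring α] (A : Matrix m m α)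
    (a b : n) (u v : m × n → α) :
    u ⬝ᵥ (A ⊗ₖ single a b 1) *ᵥ v = clockSlice u a ⬝ᵥ A *ᵥ clockSlice v b := by
  simp [dotProduct, mulVec, Fintype.sum_prod_type, clockSlice, single_apply, ite_and, mul_sum]

end Slices

theorem Matrix.IsHermitian.star_dotProduct_eq_zero_of_mulVec_eq_smul {n α : Type*} [Fintype n]
    [Field α] [StarRing α] {A : Matrix n n α} (hA : A.IsHermitian) {χ x : n → α} {μ : α}
    (hχ : A *ᵥ χ = 0) (hx : A *ᵥ x = μ • x) (hμ : μ ≠ 0) : star χ ⬝ᵥ x = 0 := by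
  have h : star χ ⬝ᵥ A *ᵥ x = 0 := by
    rw [dotProduct_mulVec, ← hA.eq, ← star_mulVec, hχ, star_zero, zero_dotProduct]
  rw [hx, dotProduct_smul, smul_eq_mul] at h
  exact (mul_eq_zero.mp h).resolve_left hμ

theorem star_mulVec_dotProduct_mulVec_of_mem_unitaryGroup {n α : Type*} [Fintype n]
    [DecidableEq n] [CommRing α] [StarRing α] {A : Matrix n n α} (hA : A ∈ unitaryGroup n α)
    (x y : n → α) : star (A *ᵥ x) ⬝ᵥ A *ᵥ y = star x ⬝ᵥ y := by
  rw [star_mulVec, ← dotProduct_mulVec, mulVec_mulVec, ← star_eq_conjTranspose,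
    mem_unitaryGroup_iff'.mp hA, one_mulVec]

theorem norm_toLp_sq {𝕜 n : Type*} [RCLike 𝕜] [Fintype n] (v : n → 𝕜) :
    ‖WithLp.toLp 2 v‖ ^ 2 = RCLike.re (star v ⬝ᵥ v) := by
  rw [← inner_self_eq_norm_sq (𝕜 := 𝕜), EuclideanSpace.inner_toLp_toLp, dotProduct_comm]

section Propagation

variable {d T : ℕ} (U : Fin T → Matrix (Fin d) (Fin d) ℂ)

theorem Hprop_isHermitian : (Hprop d T U).IsHermitian := by
  simp only [IsHermitian, Hprop, conjTranspose_sum, conjTranspose_sub, conjTranspose_smul,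
    conjTranspose_kronecker, conjTranspose_add, conjTranspose_single, conjTranspose_one,
    conjTranspose_conjTranspose, star_one, star_div₀, star_ofNat]
  exact sum_congr rfl fun t _ => sub_right_comm _ _ _

def propagationError (ψ : Fin d × Fin (T + 1) → ℂ) (t : Fin T) : Fin d → ℂ :=
  clockSlice ψ t.succ - U t *ᵥ clockSlice ψ t.castSucc

/-- `circuitPrefixAdjoint U s = (U (s-1) * ⋯ * U 0)ᴴ`. -/
def circuitPrefixAdjoint : Fin (T + 1) → Matrix (Fin d) (Fin d) ℂ :=
  Fin.partialProd fun t => (U t)ᴴ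

def historyState (φ : Fin d → ℂ) : Fin d × Fin (T + 1) → ℂ :=
  fun p => ((circuitPrefixAdjoint U p.2)ᴴ *ᵥ φ) p.1

theorem clockSlice_historyState (φ : Fin d → ℂ) (s : Fin (T + 1)) :
    clockSlice (historyState U φ) s = (circuitPrefixAdjoint U s)ᴴ *ᵥ φ :=
  rfl

theorem conjTranspose_circuitPrefixAdjoint_succ (t : Fin T) :
    (circuitPrefixAdjoint U t.succ)ᴴ = U t * (circuitPrefixAdjoint U t.castSucc)ᴴ := by
  rw [circuitPrefixAdjoint, Fin.partialProd_succ, conjTranspose_mul, conjTranspose_conjTranspose]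

theorem propagationError_historyState (φ : Fin d → ℂ) :
    propagationError U (historyState U φ) = 0 := by
  ext t : 1
  rw [propagationError, clockSlice_historyState, clockSlice_historyState,
    conjTranspose_circuitPrefixAdjoint_succ, ← mulVec_mulVec, sub_self, Pi.zero_apply]

theorem star_historyState_dotProduct (φ : Fin d → ℂ) (ψ : Fin d × Fin (T + 1) → ℂ) :
    star (historyState U φ) ⬝ᵥ ψ =
      star φ ⬝ᵥ ∑ s, circuitPrefixAdjoint U s *ᵥ clockSlice ψ s := by
  rw [dotProduct_eq_sum_clockSlice, dotProduct_sum]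
  refine sum_congr rfl fun s _ => ?_
  rw [clockSlice_star, clockSlice_historyState, star_mulVec, conjTranspose_conjTranspose,
    dotProduct_mulVec]

variable {U}

theorem circuitPrefixAdjoint_succ_mul (hU : ∀ t, U t ∈ unitaryGroup (Fin d) ℂ) (t : Fin T) :
    circuitPrefixAdjoint U t.succ * U t = circuitPrefixAdjoint U t.castSucc := by
  rw [circuitPrefixAdjoint, Fin.partialProd_succ, Matrix.mul_assoc, ← star_eq_conjTranspose,
    mem_unitaryGroup_iff'.mp (hU t), Matrix.mul_one]

theorem circuitPrefixAdjoint_mem_unitaryGroup (hU : ∀ t, U t ∈ unitaryGroup (Fin d) ℂ)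
    (s : Fin (T + 1)) : circuitPrefixAdjoint U s ∈ unitaryGroup (Fin d) ℂ := by
  induction s using Fin.induction with
  | zero => simp [circuitPrefixAdjoint, one_mem]
  | succ t ih =>
    rw [circuitPrefixAdjoint, Fin.partialProd_succ]
    exact mul_mem ih (Unitary.star_mem (hU t))

theorem star_dotProduct_Hprop_mulVec (hU : ∀ t, U t ∈ unitaryGroup (Fin d) ℂ)
    (ψ : Fin d × Fin (T + 1) → ℂ) :
    star ψ ⬝ᵥ Hprop d T U *ᵥ ψ =
      (1 / 2) * ∑ t, star (propagationError U ψ t) ⬝ᵥ propagationError U ψ t := by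
  rw [Hprop, sum_mulVec, dotProduct_sum, mul_sum]
  refine sum_congr rfl fun t _ => ?_
  have hUU : (U t)ᴴ * U t = 1 := mem_unitaryGroup_iff'.mp (hU t)
  simp only [sub_mulVec, smul_mulVec, kronecker_add, add_mulVec, dotProduct_sub, dotProduct_add,
    dotProduct_smul, dotProduct_kronecker_single_mulVec, one_mulVec, propagationError, star_sub,
    sub_dotProduct, star_mulVec, ← dotProduct_mulVec, smul_eq_mul, mulVec_mulVec, hUU,
    clockSlice_star]
  ring

theorem Hprop_posSemidef (hU : ∀ t, U t ∈ unitaryGroup (Fin d) ℂ) : (Hprop d T U).PosSemidef := by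
  refine .of_dotProduct_mulVec_nonneg (Hprop_isHermitian U) fun ψ => ?_
  rw [star_dotProduct_Hprop_mulVec hU]
  exact mul_nonneg (div_nonneg zero_le_one zero_le_two)
    (sum_nonneg fun t _ => dotProduct_star_self_nonneg _)

theorem Hprop_mulVec_historyState (hU : ∀ t, U t ∈ unitaryGroup (Fin d) ℂ) (φ : Fin d → ℂ) :
    Hprop d T U *ᵥ historyState U φ = 0 := by
  rw [← (Hprop_posSemidef hU).dotProduct_mulVec_zero_iff, star_dotProduct_Hprop_mulVec hU,
    propagationError_historyState]
  simp

theorem Hprop_energy_lower_bound (hU : ∀ t, U t ∈ unitaryGroup (Fin d) ℂ)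
    (ψ : Fin d × Fin (T + 1) → ℂ) (hψ : ∀ χ, Hprop d T U *ᵥ χ = 0 → star χ ⬝ᵥ ψ = 0) :
    3 / ((T : ℝ) + 1) ^ 2 * (star ψ ⬝ᵥ ψ).re ≤ (star ψ ⬝ᵥ Hprop d T U *ᵥ ψ).re := by
  set w : Fin (T + 1) → Fin d → ℂ := fun s => circuitPrefixAdjoint U s *ᵥ clockSlice ψ s
  have hw_sum : ∑ s, w s = 0 := by
    have h := hψ _ (Hprop_mulVec_historyState hU (∑ s, w s))
    rwa [star_historyState_dotProduct, dotProduct_star_self_eq_zero] at h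
  have hw_norm (s : Fin (T + 1)) :
      ‖WithLp.toLp 2 (w s)‖ ^ 2 = (star (clockSlice ψ s) ⬝ᵥ clockSlice ψ s).re := by
    rw [norm_toLp_sq, star_mulVec_dotProduct_mulVec_of_mem_unitaryGroup
      (circuitPrefixAdjoint_mem_unitaryGroup hU s)]
    rfl
  have hw_step (t : Fin T) : ‖WithLp.toLp 2 (w t.succ) - WithLp.toLp 2 (w t.castSucc)‖ ^ 2 =
      (star (propagationError U ψ t) ⬝ᵥ propagationError U ψ t).re := by
    have hdiff :
        w t.succ - w t.castSucc = circuitPrefixAdjoint U t.succ *ᵥ propagationError U ψ t := by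
      rw [propagationError, mulVec_sub, mulVec_mulVec, circuitPrefixAdjoint_succ_mul hU]
    rw [← WithLp.toLp_sub, hdiff, norm_toLp_sq, star_mulVec_dotProduct_mulVec_of_mem_unitaryGroup
      (circuitPrefixAdjoint_mem_unitaryGroup hU t.succ)]
    rfl
  have hpoincare := discrete_poincare_fin ℂ T (fun s => WithLp.toLp 2 (w s))
    (by rw [← WithLp.toLp_sum, hw_sum, WithLp.toLp_zero])
  simp only [hw_norm, hw_step] at hpoincare
  rw [star_dotProduct_Hprop_mulVec hU, dotProduct_eq_sum_clockSlice]
  simp only [clockSlice_star, Complex.re_sum, Complex.mul_re]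
  have hhalf : (1 / 2 : ℂ).re = 1 / 2 ∧ (1 / 2 : ℂ).im = 0 := by norm_num
  rw [hhalf.1, hhalf.2, zero_mul, sub_zero, div_mul_eq_mul_div, div_le_iff₀ (by positivity)]
  linarith

end Propagation

theorem Hprop_nonzero_eigenvalue_lower_bound_general
    (d T : ℕ)
    (U : Fin T → Matrix (Fin d) (Fin d) ℂ)
    (hU : ∀ t, U t ∈ Matrix.unitaryGroup (Fin d) ℂ) :
    (∀ ψ : Fin d × Fin (T + 1) → ℂ,
      star ψ ⬝ᵥ ψ = 1 →
      (∀ χ : Fin d × Fin (T + 1) → ℂ, (Hprop d T U).mulVec χ = 0 → star χ ⬝ᵥ ψ = 0) →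
      (2 : ℝ) / ((T : ℝ) + 1) ^ 2 ≤ (star ψ ⬝ᵥ (Hprop d T U).mulVec ψ).re) ∧
    (∀ (μ : ℝ) (x : Fin d × Fin (T + 1) → ℂ), x ≠ 0 →
      (Hprop d T U).mulVec x = (μ : ℂ) • x → μ ≠ 0 →
      (2 : ℝ) / ((T : ℝ) + 1) ^ 2 ≤ μ) := by
  have h23 : (2 : ℝ) / ((T : ℝ) + 1) ^ 2 ≤ 3 / ((T : ℝ) + 1) ^ 2 := by gcongr; norm_num
  refine ⟨fun ψ hψ hker => ?_, fun μ x hx hμx hμ => ?_⟩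
  · have h := Hprop_energy_lower_bound hU ψ hker
    rw [hψ, Complex.one_re, mul_one] at h
    exact h23.trans h
  · have hker (χ) (hχ : Hprop d T U *ᵥ χ = 0) : star χ ⬝ᵥ x = 0 :=
      (Hprop_isHermitian U).star_dotProduct_eq_zero_of_mulVec_eq_smul hχ hμx
        (Complex.ofReal_ne_zero.mpr hμ)
    have h := Hprop_energy_lower_bound hU x hker
    have hx_pos : 0 < (star x ⬝ᵥ x).re :=
      (Complex.pos_iff.mp (dotProduct_star_self_pos_iff.mpr hx)).1
    rw [hμx, dotProduct_smul, smul_eq_mul, Complex.re_ofReal_mul] at h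
    exact h23.trans (le_of_mul_le_mul_right h hx_pos)

/-- Every unit vector orthogonal to the kernel of the propagation Hamiltonian has
energy at least `2/(T+1)²`; equivalently, every nonzero eigenvalue of `H_prop` is
at least `2/(T+1)²`. -/
theorem Hprop_nonzero_eigenvalue_lower_bound
    (d T : ℕ) (hd : 1 ≤ d) (hT : 1 ≤ T)
    (U : Fin T → Matrix (Fin d) (Fin d) ℂ)
    (hU : ∀ t, U t ∈ Matrix.unitaryGroup (Fin d) ℂ) :
    (∀ ψ : Fin d × Fin (T + 1) → ℂ,
      star ψ ⬝ᵥ ψ = 1 →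
      (∀ χ : Fin d × Fin (T + 1) → ℂ, (Hprop d T U).mulVec χ = 0 → star χ ⬝ᵥ ψ = 0) →
      (2 : ℝ) / ((T : ℝ) + 1) ^ 2 ≤ (star ψ ⬝ᵥ (Hprop d T U).mulVec ψ).re) ∧
    (∀ (μ : ℝ) (x : Fin d × Fin (T + 1) → ℂ), x ≠ 0 →
      (Hprop d T U).mulVec x = (μ : ℂ) • x → μ ≠ 0 →
      (2 : ℝ) / ((T : ℝ) + 1) ^ 2 ≤ μ) :=
  Hprop_nonzero_eigenvalue_lower_bound_general d T U hU
end
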